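/- (Block Gershgorin theorem) Let A be a Hermitian matrix partitioned into blocks A_{ij} with square diagonal blocks A_{ii}. Then every eigenvalue λ of A lies in the union over i and over eigenvalues μ of A_{ii} of disks centered at μ with radius equal to Σ_{j≠i} σ_max(A_{ij}). -/

import Mathlib

/-!
Let `v` be an eigenvector of `A` for `μ` and let `i` be a block index at which `‖v_i‖` is
maximal. Block row `i` of `A v = μ v` reads `(A_ii - μ) v_i = -∑_{j ≠ i} A_ij v_j`, whose norm is at
most `(∑_{j ≠ i} σ_max(A_ij)) ‖v_i‖`. On the other hand, expanding `v_i` in an orthonormal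
eigenbasis of the Hermitian block `A_ii` shows `‖(A_ii - μ) v_i‖ ≥ |μ - ν| ‖v_i‖` for the
eigenvalue `ν` of `A_ii` closest to `μ`.
-/

open Matrix

/-- The largest singular value of a complex matrix, i.e. the operator norm of the
associated linear map between Euclidean spaces. -/
noncomputable def sigmaMaxC {m n : Type*} [Fintype m] [Fintype n] [DecidableEq n]
    (A : Matrix m n ℂ) : ℝ :=
  ‖LinearMap.toContinuousLinearMap (Matrix.toEuclideanLin A)‖

open Module.End in
theorem LinearMap.IsSymmetric.exists_hasEigenvalue_norm_sub_mul_le {𝕜 E : Type*} [RCLike 𝕜]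
    [NormedAddCommGroup E] [InnerProductSpace 𝕜 E] [FiniteDimensional 𝕜 E] [Nontrivial E]
    {T : E →ₗ[𝕜] E} (hT : T.IsSymmetric) (μ : 𝕜) (x : E) :
    ∃ ν, HasEigenvalue T ν ∧ ‖μ - ν‖ * ‖x‖ ≤ ‖T x - μ • x‖ := by
  have : NeZero (Module.finrank 𝕜 E) := ⟨Module.finrank_pos.ne'⟩
  set b := hT.eigenvectorBasis rfl
  set eig := hT.eigenvalues rfl
  obtain ⟨k, hk⟩ := Finite.exists_min fun j => ‖μ - (eig j : 𝕜)‖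
  refine ⟨eig k, hT.hasEigenvalue_eigenvalues rfl k, ?_⟩
  have hcoord : ∀ j, b.repr (T x - μ • x) j = ((eig j : 𝕜) - μ) * b.repr x j := fun j => by
    simp only [map_sub, map_smul, PiLp.sub_apply, PiLp.smul_apply, smul_eq_mul,
      hT.eigenvectorBasis_apply_self_apply, b, eig]
    ring
  rw [← pow_le_pow_iff_left₀ (by positivity) (norm_nonneg _) two_ne_zero, mul_pow,
    ← b.repr.norm_map x, ← b.repr.norm_map, EuclideanSpace.norm_sq_eq,
    EuclideanSpace.norm_sq_eq, Finset.mul_sum]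
  gcongr with j
  rw [hcoord, norm_mul, mul_pow]
  gcongr
  exact (hk j).trans_eq (norm_sub_rev _ _)

theorem Matrix.IsHermitian.exists_mem_spectrum_norm_sub_mul_le {𝕜 n : Type*} [RCLike 𝕜]
    [Fintype n] [DecidableEq n] {B : Matrix n n 𝕜} (hB : B.IsHermitian) (μ : 𝕜)
    {x : EuclideanSpace 𝕜 n} (hx : x ≠ 0) :
    ∃ ν ∈ spectrum 𝕜 B, ‖μ - ν‖ * ‖x‖ ≤ ‖toEuclideanLin B x - μ • x‖ := by
  have := nontrivial_of_ne x 0 hx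
  obtain ⟨ν, hν, h⟩ :=
    (isSymmetric_toEuclideanLin_iff.mpr hB).exists_hasEigenvalue_norm_sub_mul_le μ x
  exact ⟨ν, spectrum_toLpLin (A := B) 2 ▸ hν.mem_spectrum, h⟩

theorem Matrix.exists_toEuclideanLin_eq_smul_of_mem_spectrum {𝕜 n : Type*} [RCLike 𝕜]
    [Fintype n] [DecidableEq n] {A : Matrix n n 𝕜} {μ : 𝕜} (hμ : μ ∈ spectrum 𝕜 A) :
    ∃ v : EuclideanSpace 𝕜 n, v ≠ 0 ∧ toEuclideanLin A v = μ • v := by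
  rw [← spectrum_toLpLin 2, ← Module.End.hasEigenvalue_iff_mem_spectrum] at hμ
  obtain ⟨v, hv⟩ := hμ.exists_hasEigenvector
  exact ⟨v, hv.2, hv.apply_eq_smul⟩

theorem norm_toEuclideanLin_le_sigmaMaxC {m n : Type*} [Fintype m] [Fintype n] [DecidableEq n]
    (M : Matrix m n ℂ) (x : EuclideanSpace ℂ n) :
    ‖toEuclideanLin M x‖ ≤ sigmaMaxC M * ‖x‖ :=
  (LinearMap.toContinuousLinearMap (toEuclideanLin M)).le_opNorm x

theorem sigmaMaxC_nonneg {m n : Type*} [Fintype m] [Fintype n] [DecidableEq n]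
    (M : Matrix m n ℂ) : 0 ≤ sigmaMaxC M :=
  norm_nonneg _

section Blocks

variable {𝕜 ι : Type*} [RCLike 𝕜] {β : ι → Type*}

def EuclideanSpace.sigmaBlock (v : EuclideanSpace 𝕜 (Σ i, β i)) (i : ι) :
    EuclideanSpace 𝕜 (β i) :=
  WithLp.toLp 2 fun k => v ⟨i, k⟩

open EuclideanSpace

theorem EuclideanSpace.sigmaBlock_smul (c : 𝕜) (v : EuclideanSpace 𝕜 (Σ i, β i)) (i : ι) :
    sigmaBlock (c • v) i = c • sigmaBlock v i :=
  rfl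

theorem EuclideanSpace.exists_sigmaBlock_ne_zero {v : EuclideanSpace 𝕜 (Σ i, β i)}
    (hv : v ≠ 0) : ∃ i, sigmaBlock v i ≠ 0 := by
  contrapose! hv
  ext ⟨i, k⟩
  simpa [sigmaBlock] using congr($(hv i) k)

variable [Fintype ι] [DecidableEq ι] [∀ i, Fintype (β i)] [∀ i, DecidableEq (β i)]

theorem Matrix.sigmaBlock_toEuclideanLin (A : Matrix (Σ i, β i) (Σ i, β i) 𝕜)
    (v : EuclideanSpace 𝕜 (Σ i, β i)) (i : ι) :
    sigmaBlock (toEuclideanLin A v) i =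
      ∑ j, toEuclideanLin (A.submatrix (Sigma.mk i) (Sigma.mk j)) (sigmaBlock v j) := by
  ext k
  simp [sigmaBlock, toLpLin_apply, mulVec, dotProduct, ← Finset.univ_sigma_univ,
    Finset.sum_sigma]

theorem Matrix.norm_toEuclideanLin_sigmaBlock_sub_smul_le (A : Matrix (Σ i, β i) (Σ i, β i) ℂ)
    {μ : ℂ} {v : EuclideanSpace ℂ (Σ i, β i)} (hv : toEuclideanLin A v = μ • v) (i : ι) :
    ‖toEuclideanLin (A.submatrix (Sigma.mk i) (Sigma.mk i)) (sigmaBlock v i) - μ • sigmaBlock v i‖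
      ≤ ∑ j ∈ Finset.univ.erase i,
          sigmaMaxC (A.submatrix (Sigma.mk i) (Sigma.mk j)) * ‖sigmaBlock v j‖ := by
  have hrow := A.sigmaBlock_toEuclideanLin v i
  rw [hv, sigmaBlock_smul, ← Finset.add_sum_erase _ _ (Finset.mem_univ i)] at hrow
  rw [hrow, sub_add_cancel_left, norm_neg]
  exact norm_sum_le_of_le _ fun j _ => norm_toEuclideanLin_le_sigmaMaxC _ _

end Blocks

/-- **Block Gershgorin theorem.** Every eigenvalue of a Hermitian block-partitioned
matrix lies in a disk centered at an eigenvalue of some diagonal block `A_{ii}`,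
with radius the sum of the largest singular values of the off-diagonal blocks in
block-row `i`. -/
theorem block_gershgorin {L : ℕ} (d : Fin L → ℕ)
    (A : Matrix ((i : Fin L) × Fin (d i)) ((i : Fin L) × Fin (d i)) ℂ)
    (hA : A.IsHermitian) (μ : ℂ) (hμ : μ ∈ spectrum ℂ A) :
    ∃ i : Fin L, ∃ ν ∈ spectrum ℂ (A.submatrix (Sigma.mk i) (Sigma.mk i)),
      ‖μ - ν‖ ≤ ∑ j ∈ Finset.univ.erase i,
        sigmaMaxC (A.submatrix (Sigma.mk i) (Sigma.mk j)) := by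
  obtain ⟨v, hv0, hv⟩ := exists_toEuclideanLin_eq_smul_of_mem_spectrum hμ
  obtain ⟨p, hp⟩ := EuclideanSpace.exists_sigmaBlock_ne_zero hv0
  have : Nonempty (Fin L) := ⟨p⟩
  obtain ⟨i, hi⟩ := Finite.exists_max fun j => ‖v.sigmaBlock j‖
  have hvi : 0 < ‖v.sigmaBlock i‖ := (norm_pos_iff.2 hp).trans_le (hi p)
  obtain ⟨ν, hν, hlow⟩ :=
    (hA.submatrix (Sigma.mk i)).exists_mem_spectrum_norm_sub_mul_le μ (norm_pos_iff.1 hvi)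
  refine ⟨i, ν, hν, le_of_mul_le_mul_right ?_ hvi⟩
  calc ‖μ - ν‖ * ‖v.sigmaBlock i‖
      ≤ ∑ j ∈ Finset.univ.erase i, sigmaMaxC (A.submatrix (Sigma.mk i) (Sigma.mk j)) *
          ‖v.sigmaBlock j‖ := hlow.trans (A.norm_toEuclideanLin_sigmaBlock_sub_smul_le hv i)
    _ ≤ _ := by
      rw [Finset.sum_mul]
      gcongr with j
      · exact sigmaMaxC_nonneg _
      · exact hi j
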